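/- arXiv:1307.6685 — 2 statements merged into one kernel-verified Lean document; each statement's English description precedes it below -/
import Mathlib

section
/- Let (ε_t)_{t∈ℤ} be an i.i.d. sequence of real random variables and c, g : ℝ → [0,∞) measurable functions. Suppose for some α ∈ (0,1] that E[c(ε_0)^α] < 1 and E[g(ε_0)^α] < ∞. Then the random series Σ_{k=0}^∞ g(ε_{t-1-k}) · Π_{j=0}^{k-1} c(ε_{t-1-j}) converges almost surely, and its α-th moment is at most E[g(ε_0)^α] / (1 - E[c(ε_0)^α]). -/
/-!
For `0 < α ≤ 1` the map `x ↦ x ^ α` is subadditive, so `(∑ Tₖ) ^ α ≤ ∑ Tₖ ^ α` for the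
nonnegative terms `Tₖ` of the series. By independence and stationarity of the innovations,
`E[Tₖ ^ α] = E[g(ε₀) ^ α] · E[c(ε₀) ^ α] ^ k`, so by monotone convergence `E[∑ Tₖ ^ α]` is the
geometric sum `E[g(ε₀) ^ α] / (1 - E[c(ε₀) ^ α]) < ∞`. Hence `∑ Tₖ ^ α` is finite almost surely,
which forces `∑ Tₖ` to converge, and the moment bound follows.
-/

open MeasureTheory ProbabilityTheory Finset

theorem ENNReal.rpow_tsum_le_tsum_rpow {ι : Type*} (f : ι → ENNReal) {p : ℝ} (hp : 0 < p)
    (hp1 : p ≤ 1) : (∑' i, f i) ^ p ≤ ∑' i, f i ^ p := by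
  rw [ENNReal.tsum_eq_iSup_sum, ← ENNReal.le_rpow_inv_iff hp, iSup_le_iff]
  intro s
  rw [ENNReal.le_rpow_inv_iff hp]
  calc (∑ i ∈ s, f i) ^ p ≤ ∑ i ∈ s, f i ^ p :=
        Finset.le_sum_of_subadditive (· ^ p) (ENNReal.zero_rpow_of_pos hp).le
          (fun x y => ENNReal.rpow_add_le_add_rpow x y hp.le hp1) s f
    _ ≤ ∑' i, f i ^ p := ENNReal.sum_le_tsum s

theorem ENNReal.ofReal_tsum_rpow_le {ι : Type*} {a : ι → ℝ} (ha : ∀ i, 0 ≤ a i) {p : ℝ}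
    (hp : 0 < p) (hp1 : p ≤ 1) :
    ENNReal.ofReal ((∑' i, a i) ^ p) ≤ ∑' i, ENNReal.ofReal (a i ^ p) := by
  by_cases hsum : Summable a
  · simp only [← ENNReal.ofReal_rpow_of_nonneg (ha _) hp.le,
      ← ENNReal.ofReal_rpow_of_nonneg (tsum_nonneg ha) hp.le, ENNReal.ofReal_tsum_of_nonneg ha hsum]
    exact ENNReal.rpow_tsum_le_tsum_rpow _ hp hp1
  · simp [tsum_eq_zero_of_not_summable hsum, Real.zero_rpow hp.ne']

theorem summable_of_tsum_ofReal_rpow_ne_top {ι : Type*} {a : ι → ℝ} (ha : ∀ i, 0 ≤ a i) {p : ℝ}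
    (hp : 0 < p) (hp1 : p ≤ 1) (h : ∑' i, ENNReal.ofReal (a i ^ p) ≠ ⊤) : Summable a := by
  have hfin : ∑' i, ENNReal.ofReal (a i) ≠ ⊤ := by
    rw [Ne, ← ENNReal.rpow_eq_top_iff_of_pos hp]
    refine ne_top_of_le_ne_top h ((ENNReal.rpow_tsum_le_tsum_rpow _ hp hp1).trans_eq ?_)
    simp only [ENNReal.ofReal_rpow_of_nonneg (ha _) hp.le]
  simpa only [ENNReal.toReal_ofReal (ha _)] using ENNReal.summable_toReal hfin

section IIDSequence

variable {Ω : Type*} [MeasurableSpace Ω] {μ : Measure Ω} {X : ℕ → Ω → ℝ} {Y : Ω → ℝ}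
  (hX : ∀ k, Measurable (X k)) (hindep : iIndepFun X μ) (hident : ∀ k, IdentDistrib (X k) Y μ μ)
include hX hindep hident

theorem lintegral_mul_prod_range_of_iIndepFun {G C : ℝ → ENNReal} (hG : Measurable G)
    (hC : Measurable C) (k : ℕ) :
    ∫⁻ ω, G (X k ω) * ∏ j ∈ range k, C (X j ω) ∂μ
      = (∫⁻ ω, G (Y ω) ∂μ) * (∫⁻ ω, C (Y ω) ∂μ) ^ k := by
  set H : ℕ → ℝ → ENNReal := fun j => if j = k then G else C
  have hH : ∀ j, Measurable (H j) := fun j => by dsimp only [H]; split_ifs <;> assumption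
  have hH_lt : ∀ j ∈ range k, H j = C := fun j hj => if_neg (mem_range.1 hj).ne
  have hprod : ∀ ω, G (X k ω) * ∏ j ∈ range k, C (X j ω) = ∏ j ∈ range (k + 1), H j (X j ω) := by
    intro ω
    rw [prod_range_succ, mul_comm, prod_congr rfl fun j hj => congrFun (hH_lt j hj) _]
    simp only [H, if_pos rfl]
  calc ∫⁻ ω, G (X k ω) * ∏ j ∈ range k, C (X j ω) ∂μ
      = ∫⁻ ω, ∏ j ∈ range (k + 1), H j (X j ω) ∂μ := lintegral_congr hprod
    _ = ∏ j ∈ range (k + 1), ∫⁻ ω, H j (X j ω) ∂μ :=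
        lintegral_prod_eq_prod_lintegral_of_indepFun _ _ (hindep.comp H hH)
          fun j => (hH j).comp (hX j)
    _ = ∏ j ∈ range (k + 1), ∫⁻ ω, H j (Y ω) ∂μ :=
        prod_congr rfl fun j _ => ((hident j).comp (hH j)).lintegral_eq
    _ = (∫⁻ ω, G (Y ω) ∂μ) * (∫⁻ ω, C (Y ω) ∂μ) ^ k := by
        rw [prod_range_succ, mul_comm, prod_congr rfl fun j hj => by rw [hH_lt j hj],
          prod_const, card_range]
        simp only [H, if_pos rfl]

theorem lintegral_ofReal_rpow_mul_prod_range_of_iIndepFun {c g : ℝ → ℝ} (hc : Measurable c)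
    (hg : Measurable g) (hc0 : ∀ x, 0 ≤ c x) (hg0 : ∀ x, 0 ≤ g x) (α : ℝ) (k : ℕ) :
    ∫⁻ ω, ENNReal.ofReal ((g (X k ω) * ∏ j ∈ range k, c (X j ω)) ^ α) ∂μ
      = (∫⁻ ω, ENNReal.ofReal (g (Y ω) ^ α) ∂μ) * (∫⁻ ω, ENNReal.ofReal (c (Y ω) ^ α) ∂μ) ^ k := by
  have hsplit : ∀ ω, ENNReal.ofReal ((g (X k ω) * ∏ j ∈ range k, c (X j ω)) ^ α)
      = ENNReal.ofReal (g (X k ω) ^ α) * ∏ j ∈ range k, ENNReal.ofReal (c (X j ω) ^ α) := by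
    intro ω
    rw [Real.mul_rpow (hg0 _) (prod_nonneg fun j _ => hc0 _),
      ← Real.finsetProd_rpow _ _ fun j _ => hc0 _, ENNReal.ofReal_mul (Real.rpow_nonneg (hg0 _) _),
      ENNReal.ofReal_prod_of_nonneg fun j _ => Real.rpow_nonneg (hc0 _) _]
  simp_rw [hsplit]
  exact lintegral_mul_prod_range_of_iIndepFun hX hindep hident
    (by fun_prop : Measurable fun x => ENNReal.ofReal (g x ^ α))
    (by fun_prop : Measurable fun x => ENNReal.ofReal (c x ^ α)) k

end IIDSequence

theorem garch_series_converges_and_moment_bound_general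
    {Ω : Type*} [MeasurableSpace Ω] (μ : Measure Ω)
    (ε : ℤ → Ω → ℝ) (c g : ℝ → ℝ)
    (hc : Measurable c) (hg : Measurable g)
    (hc0 : ∀ x, 0 ≤ c x) (hg0 : ∀ x, 0 ≤ g x)
    (hmeas : ∀ t, Measurable (ε t))
    (hindep : iIndepFun ε μ)
    (hident : ∀ t, IdentDistrib (ε t) (ε 0) μ μ)
    (α : ℝ) (hα : 0 < α) (hα1 : α ≤ 1)
    (hcα : ∫⁻ ω, ENNReal.ofReal (c (ε 0 ω) ^ α) ∂μ < 1)
    (hgα : ∫⁻ ω, ENNReal.ofReal (g (ε 0 ω) ^ α) ∂μ < ⊤)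
    (t : ℤ) :
    (∀ᵐ ω ∂μ, Summable (fun k : ℕ =>
        g (ε (t - 1 - (k : ℤ)) ω) * ∏ j ∈ Finset.range k, c (ε (t - 1 - (j : ℤ)) ω))) ∧
    ∫⁻ ω, ENNReal.ofReal ((∑' k : ℕ,
        g (ε (t - 1 - (k : ℤ)) ω) * ∏ j ∈ Finset.range k, c (ε (t - 1 - (j : ℤ)) ω)) ^ α) ∂μ
      ≤ (∫⁻ ω, ENNReal.ofReal (g (ε 0 ω) ^ α) ∂μ) /
          (1 - ∫⁻ ω, ENNReal.ofReal (c (ε 0 ω) ^ α) ∂μ) := by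
  set X : ℕ → Ω → ℝ := fun j => ε (t - 1 - j)
  set T : ℕ → Ω → ℝ := fun k ω => g (X k ω) * ∏ j ∈ range k, c (X j ω)
  have hT0 : ∀ k ω, 0 ≤ T k ω := fun k ω => mul_nonneg (hg0 _) (prod_nonneg fun j _ => hc0 _)
  have hTmeas : ∀ k, Measurable fun ω => ENNReal.ofReal (T k ω ^ α) := fun k => by
    simp only [T, X]; fun_prop
  have hXindep : iIndepFun X μ := hindep.precomp fun i j hij => by simpa using hij
  have hseries : ∫⁻ ω, ∑' k, ENNReal.ofReal (T k ω ^ α) ∂μ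
      = (∫⁻ ω, ENNReal.ofReal (g (ε 0 ω) ^ α) ∂μ) /
          (1 - ∫⁻ ω, ENNReal.ofReal (c (ε 0 ω) ^ α) ∂μ) := by
    have hmoment : ∀ k, ∫⁻ ω, ENNReal.ofReal (T k ω ^ α) ∂μ = _ :=
      lintegral_ofReal_rpow_mul_prod_range_of_iIndepFun (fun j => hmeas _) hXindep
        (fun j => hident _) hc hg hc0 hg0 α
    rw [lintegral_tsum fun k => (hTmeas k).aemeasurable]
    simp_rw [hmoment]
    rw [ENNReal.tsum_mul_left, ENNReal.tsum_geometric, div_eq_mul_inv]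
  have hfinite : ∀ᵐ ω ∂μ, ∑' k, ENNReal.ofReal (T k ω ^ α) < ⊤ := by
    refine ae_lt_top (Measurable.tsum hTmeas) ?_
    rw [hseries]
    exact ENNReal.div_ne_top hgα.ne (tsub_pos_of_lt hcα).ne'
  refine ⟨?_, ?_⟩
  · filter_upwards [hfinite] with ω hω
    exact summable_of_tsum_ofReal_rpow_ne_top (hT0 · ω) hα hα1 hω.ne
  · exact (lintegral_mono fun ω => ENNReal.ofReal_tsum_rpow_le (hT0 · ω) hα hα1).trans_eq hseries

theorem garch_series_converges_and_moment_bound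
    {Ω : Type*} [MeasurableSpace Ω] (μ : Measure Ω) [IsProbabilityMeasure μ]
    (ε : ℤ → Ω → ℝ) (c g : ℝ → ℝ)
    (hc : Measurable c) (hg : Measurable g)
    (hc0 : ∀ x, 0 ≤ c x) (hg0 : ∀ x, 0 ≤ g x)
    (hmeas : ∀ t, Measurable (ε t))
    (hindep : iIndepFun ε μ)
    (hident : ∀ t, IdentDistrib (ε t) (ε 0) μ μ)
    (α : ℝ) (hα : 0 < α) (hα1 : α ≤ 1)
    (hcα : ∫⁻ ω, ENNReal.ofReal (c (ε 0 ω) ^ α) ∂μ < 1)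
    (hgα : ∫⁻ ω, ENNReal.ofReal (g (ε 0 ω) ^ α) ∂μ < ⊤)
    (t : ℤ) :
    (∀ᵐ ω ∂μ, Summable (fun k : ℕ =>
        g (ε (t - 1 - (k : ℤ)) ω) * ∏ j ∈ Finset.range k, c (ε (t - 1 - (j : ℤ)) ω))) ∧
    ∫⁻ ω, ENNReal.ofReal ((∑' k : ℕ,
        g (ε (t - 1 - (k : ℤ)) ω) * ∏ j ∈ Finset.range k, c (ε (t - 1 - (j : ℤ)) ω)) ^ α) ∂μ
      ≤ (∫⁻ ω, ENNReal.ofReal (g (ε 0 ω) ^ α) ∂μ) /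
          (1 - ∫⁻ ω, ENNReal.ofReal (c (ε 0 ω) ^ α) ∂μ) :=
  garch_series_converges_and_moment_bound_general μ ε c g hc hg hc0 hg0 hmeas hindep hident α hα hα1
    hcα hgα t
end

section
/- Let (ε_t), (x_t) be independent sequences, (ε_t) i.i.d., (x_t) i.i.d., m ≥ 1 a natural number, and suppose E[g(ε_0)^m] < ∞, E[u(x_0)^m] < ∞, and the stationary volatility satisfies σ_t^δ = Σ_{k=0}^∞ [g(ε_{t-1-k}) + u(x_{t-1-k})] Π_{j=0}^{k-1} c(ε_{t-1-j}) with all summands independent appropriately, and E|ε_0|^{mδ} < ∞. If E|R_t|^{mδ} < ∞ where R_t = σ_t ε_t, then E[c(ε_0)^m] < 1. -/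
open MeasureTheory ProbabilityTheory
open scoped ENNReal

/-! Write `σ_t^δ = ∑ₖ aₖ` with `aₖ = (g(ε_{t-1-k}) + u(x_{t-1-k})) ∏_{j<k} c(ε_{t-1-j}) ≥ 0`.
Superadditivity of `y ↦ y ^ m` gives `(∑ₖ aₖ)^m ≥ ∑ₖ aₖ^m`, and each `aₖ^m |ε_t|^{mδ}` is a
product of functions of distinct innovations, so by independence and identical distribution its
expectation is `E[(g(ε₀) + u(x₀))^m] · E[c(ε₀)^m]^k · E|ε₀|^{mδ}`. Hence `E|R_t|^{mδ}` dominates a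
positive multiple of the geometric series `∑ₖ E[c(ε₀)^m]^k`, which therefore converges:
`E[c(ε₀)^m] < 1`. -/

open Finset

theorem Finset.sum_pow_le_pow_sum {ι R : Type*} [CommSemiring R] [PartialOrder R]
    [IsOrderedRing R] {s : Finset ι} {f : ι → R} (hf : ∀ i ∈ s, 0 ≤ f i) {m : ℕ} (hm : m ≠ 0) :
    ∑ i ∈ s, f i ^ m ≤ (∑ i ∈ s, f i) ^ m := by
  classical
  induction s using Finset.induction_on with
  | empty => simp [zero_pow hm]
  | insert i s hi ih =>
    rw [sum_insert hi, sum_insert hi]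
    have hfs : ∀ j ∈ s, 0 ≤ f j := fun j hj => hf j (mem_insert_of_mem hj)
    calc f i ^ m + ∑ j ∈ s, f j ^ m ≤ f i ^ m + (∑ j ∈ s, f j) ^ m := by gcongr; exact ih hfs
      _ ≤ (f i + ∑ j ∈ s, f j) ^ m :=
        pow_add_pow_le (hf i (mem_insert_self i s)) (sum_nonneg hfs) hm

theorem ENNReal.tsum_pow_le_pow_tsum {ι : Type*} (f : ι → ℝ≥0∞) {m : ℕ} (hm : m ≠ 0) :
    ∑' i, f i ^ m ≤ (∑' i, f i) ^ m := by
  rw [ENNReal.tsum_eq_iSup_sum]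
  refine iSup_le fun s => ?_
  calc ∑ i ∈ s, f i ^ m ≤ (∑ i ∈ s, f i) ^ m := sum_pow_le_pow_sum (fun _ _ => zero_le) hm
    _ ≤ (∑' i, f i) ^ m := by gcongr; exact ENNReal.sum_le_tsum s

theorem ENNReal.tsum_ofReal_pow_le_ofReal_pow_tsum {ι : Type*} {f : ι → ℝ} (hf : ∀ i, 0 ≤ f i)
    (hs : Summable f) {m : ℕ} (hm : m ≠ 0) :
    ∑' i, ENNReal.ofReal (f i ^ m) ≤ ENNReal.ofReal ((∑' i, f i) ^ m) := by
  simp_rw [ENNReal.ofReal_pow (hf _)]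
  rw [ENNReal.ofReal_pow (tsum_nonneg hf), ENNReal.ofReal_tsum_of_nonneg hf hs]
  exact ENNReal.tsum_pow_le_pow_tsum _ hm

theorem lintegral_ofReal_pow_add_lintegral_ofReal_pow_le {Ω : Type*} [MeasurableSpace Ω]
    {μ : Measure Ω} {f h : Ω → ℝ} (hf : AEMeasurable f μ) (hf0 : ∀ ω, 0 ≤ f ω) (hh0 : ∀ ω, 0 ≤ h ω)
    {m : ℕ} (hm : m ≠ 0) :
    ∫⁻ ω, ENNReal.ofReal (f ω ^ m) ∂μ + ∫⁻ ω, ENNReal.ofReal (h ω ^ m) ∂μ ≤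
      ∫⁻ ω, ENNReal.ofReal ((f ω + h ω) ^ m) ∂μ := by
  rw [← lintegral_add_left' (by fun_prop)]
  refine lintegral_mono fun ω => ?_
  rw [← ENNReal.ofReal_add (pow_nonneg (hf0 ω) m) (pow_nonneg (hh0 ω) m)]
  exact ENNReal.ofReal_le_ofReal (pow_add_pow_le (hf0 ω) (hh0 ω) hm)

theorem tsum_lintegral_ofReal_pow_mul_le {Ω : Type*} [MeasurableSpace Ω] {μ : Measure Ω}
    {a : ℕ → Ω → ℝ} {w : Ω → ℝ} (ha : ∀ k, Measurable (a k)) (hw : Measurable w)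
    (ha0 : ∀ k ω, 0 ≤ a k ω) (hs : ∀ᵐ ω ∂μ, Summable (a · ω)) {m : ℕ} (hm : m ≠ 0) :
    ∑' k, ∫⁻ ω, ENNReal.ofReal (a k ω ^ m) * ENNReal.ofReal (w ω) ∂μ ≤
      ∫⁻ ω, ENNReal.ofReal ((∑' k, a k ω) ^ m * w ω) ∂μ := by
  rw [← lintegral_tsum fun k => by fun_prop]
  refine lintegral_mono_ae (hs.mono fun ω hω => ?_)
  rw [ENNReal.tsum_mul_right, ENNReal.ofReal_mul (pow_nonneg (tsum_nonneg (ha0 · ω)) m)]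
  exact mul_le_mul_left (ENNReal.tsum_ofReal_pow_le_ofReal_pow_tsum (ha0 · ω) hω hm) _

section IID

variable {Ω β : Type*} [MeasurableSpace Ω] [MeasurableSpace β] {μ : Measure Ω} {Y₀ : Ω → β}

theorem lintegral_prod_comp_eq_prod_lintegral_of_iIndepFun {ι : Type*} {Y : ι → Ω → β}
    (hY : ∀ i, Measurable (Y i)) (hind : iIndepFun Y μ)
    (hid : ∀ i, IdentDistrib (Y i) Y₀ μ μ) {f : ι → β → ℝ≥0∞} (hf : ∀ i, Measurable (f i))
    (s : Finset ι) :
    ∫⁻ ω, ∏ i ∈ s, f i (Y i ω) ∂μ = ∏ i ∈ s, ∫⁻ ω, f i (Y₀ ω) ∂μ := by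
  rw [lintegral_prod_eq_prod_lintegral_of_indepFun s (fun i ω => f i (Y i ω))
    (hind.comp f hf) fun i => (hf i).comp (hY i)]
  exact prod_congr rfl fun i _ => ((hid i).comp (hf i)).lintegral_eq

theorem lintegral_mul_prod_mul_of_iIndepFun_identDistrib {Y : ℤ → Ω → β}
    (hY : ∀ i, Measurable (Y i)) (hind : iIndepFun Y μ) (hid : ∀ i, IdentDistrib (Y i) Y₀ μ μ)
    {W H C : β → ℝ≥0∞} (hW : Measurable W) (hH : Measurable H) (hC : Measurable C)
    (t : ℤ) (k : ℕ) :
    ∫⁻ ω, H (Y (t - 1 - k) ω) * (∏ j ∈ range k, C (Y (t - 1 - j) ω)) * W (Y t ω) ∂μ =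
      (∫⁻ ω, H (Y₀ ω) ∂μ) * (∫⁻ ω, C (Y₀ ω) ∂μ) ^ k * ∫⁻ ω, W (Y₀ ω) ∂μ := by
  -- after reindexing by `n ↦ t - n`, the factors sit at `n = k + 1`, `1, …, k` and `0`
  set φ : ℕ → β → ℝ≥0∞ := fun n => if n = 0 then W else if n = k + 1 then H else C
  have hφ : ∀ n, Measurable (φ n) := fun n => by dsimp only [φ]; split_ifs <;> assumption
  have peel : ∀ ψ : ℕ → (β → ℝ≥0∞) → ℝ≥0∞,
      ∏ n ∈ range (k + 2), ψ n (φ n) = ψ (k + 1) H * (∏ j ∈ range k, ψ (j + 1) C) * ψ 0 W := by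
    intro ψ
    rw [prod_range_succ, prod_range_succ']
    have hmid : ∀ j ∈ range k, ψ (j + 1) (φ (j + 1)) = ψ (j + 1) C := fun j hj => by
      simp [φ, (mem_range.1 hj).ne]
    simp only [prod_congr rfl hmid, φ, if_pos, if_neg (Nat.succ_ne_zero k)]
    ring
  have hidx : ∀ n : ℕ, t - ((n + 1 : ℕ) : ℤ) = t - 1 - n := fun n => by push_cast; ring
  have hZ := hind.precomp (g := fun n : ℕ => t - n) fun a b h => by simpa using h
  calc ∫⁻ ω, H (Y (t - 1 - k) ω) * (∏ j ∈ range k, C (Y (t - 1 - j) ω)) * W (Y t ω) ∂μ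
      = ∫⁻ ω, ∏ n ∈ range (k + 2), φ n (Y (t - n) ω) ∂μ := lintegral_congr fun ω => by
        have h := peel fun n F => F (Y (t - n) ω)
        simp only [hidx, Nat.cast_zero, sub_zero] at h
        exact h.symm
    _ = ∏ n ∈ range (k + 2), ∫⁻ ω, φ n (Y₀ ω) ∂μ :=
        lintegral_prod_comp_eq_prod_lintegral_of_iIndepFun (fun _ => hY _) hZ (fun _ => hid _) hφ _
    _ = _ := by rw [peel fun _ F => ∫⁻ ω, F (Y₀ ω) ∂μ, prod_const, card_range]

end IID

theorem garchx_moment_necessity_general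
    {Ω : Type*} [MeasurableSpace Ω] (μ : Measure Ω) [IsProbabilityMeasure μ]
    (ε x : ℤ → Ω → ℝ) (c g u : ℝ → ℝ)
    (hc : Measurable c) (hg : Measurable g) (hu : Measurable u)
    (hc0 : ∀ y, 0 ≤ c y) (hg0 : ∀ y, 0 ≤ g y) (hu0 : ∀ y, 0 ≤ u y)
    (hmeasε : ∀ t, Measurable (ε t)) (hmeasx : ∀ t, Measurable (x t))
    -- the joint innovations (ε_t, x_t) are i.i.d., with ε_0 independent of x_0
    (hiid : iIndepFun (fun t ω => (ε t ω, x t ω)) μ)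
    (hident : ∀ t, IdentDistrib (fun ω => (ε t ω, x t ω)) (fun ω => (ε 0 ω, x 0 ω)) μ μ)
    (m : ℕ) (hm : 1 ≤ m) (δ : ℝ)
    -- nondegeneracy (ε not a.s. zero, volatility positive a.s.)
    (hεpos : 0 < ∫⁻ ω, ENNReal.ofReal (|ε 0 ω| ^ ((m : ℝ) * δ)) ∂μ)
    (hgu : 0 < ∫⁻ ω, ENNReal.ofReal (g (ε 0 ω) ^ m) ∂μ +
             ∫⁻ ω, ENNReal.ofReal (u (x 0 ω) ^ m) ∂μ)
    (t : ℤ)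
    -- the causal series defining σ_t^δ converges a.s.
    (hsum : ∀ᵐ ω ∂μ, Summable (fun k : ℕ =>
        (g (ε (t - 1 - (k : ℤ)) ω) + u (x (t - 1 - (k : ℤ)) ω)) *
          ∏ j ∈ Finset.range k, c (ε (t - 1 - (j : ℤ)) ω)))
    -- finiteness of E|R_t|^{mδ} = E[(σ_t^δ)^m |ε_t|^{mδ}]
    (hR : ∫⁻ ω, ENNReal.ofReal ((∑' k : ℕ,
        (g (ε (t - 1 - (k : ℤ)) ω) + u (x (t - 1 - (k : ℤ)) ω)) *
          ∏ j ∈ Finset.range k, c (ε (t - 1 - (j : ℤ)) ω)) ^ m *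
        |ε t ω| ^ ((m : ℝ) * δ)) ∂μ < ⊤) :
    ∫⁻ ω, ENNReal.ofReal (c (ε 0 ω) ^ m) ∂μ < 1 := by
  have hm0 : m ≠ 0 := Nat.one_le_iff_ne_zero.mp hm
  set Y : ℤ → Ω → ℝ × ℝ := fun i ω => (ε i ω, x i ω)
  set W : ℝ × ℝ → ℝ≥0∞ := fun p => ENNReal.ofReal (|p.1| ^ ((m : ℝ) * δ))
  set H : ℝ × ℝ → ℝ≥0∞ := fun p => ENNReal.ofReal ((g p.1 + u p.2) ^ m)
  set C : ℝ × ℝ → ℝ≥0∞ := fun p => ENNReal.ofReal (c p.1 ^ m)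
  set a : ℕ → Ω → ℝ := fun k ω => (g (ε (t - 1 - k) ω) + u (x (t - 1 - k) ω)) *
    ∏ j ∈ range k, c (ε (t - 1 - j) ω)
  have hH0 : 0 < ∫⁻ ω, H (Y 0 ω) ∂μ := hgu.trans_le <|
    lintegral_ofReal_pow_add_lintegral_ofReal_pow_le (by fun_prop) (fun _ => hg0 _) (fun _ => hu0 _)
      hm0
  have hterm : ∀ (k : ℕ) ω,
      H (Y (t - 1 - k) ω) * (∏ j ∈ range k, C (Y (t - 1 - j) ω)) = ENNReal.ofReal (a k ω ^ m) :=
    fun k ω => by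
      rw [mul_pow, ENNReal.ofReal_mul (pow_nonneg (add_nonneg (hg0 _) (hu0 _)) m), ← prod_pow,
        ENNReal.ofReal_prod_of_nonneg fun j _ => pow_nonneg (hc0 _) m]
  have hbound : (∫⁻ ω, H (Y 0 ω) ∂μ) * (∑' k : ℕ, (∫⁻ ω, C (Y 0 ω) ∂μ) ^ k) *
      ∫⁻ ω, W (Y 0 ω) ∂μ < ⊤ := calc
    _ = ∑' k : ℕ, ∫⁻ ω, H (Y (t - 1 - k) ω) * (∏ j ∈ range k, C (Y (t - 1 - j) ω)) *
          W (Y t ω) ∂μ := by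
      simp_rw [lintegral_mul_prod_mul_of_iIndepFun_identDistrib (Y := Y)
        (fun i => (hmeasε i).prodMk (hmeasx i)) hiid hident
        (by fun_prop : Measurable W) (by fun_prop : Measurable H) (by fun_prop : Measurable C),
        ENNReal.tsum_mul_right, ENNReal.tsum_mul_left]
      rfl
    _ = ∑' k : ℕ, ∫⁻ ω, ENNReal.ofReal (a k ω ^ m) *
          ENNReal.ofReal (|ε t ω| ^ ((m : ℝ) * δ)) ∂μ := by simp_rw [hterm]; rfl
    _ ≤ ∫⁻ ω, ENNReal.ofReal ((∑' k, a k ω) ^ m * |ε t ω| ^ ((m : ℝ) * δ)) ∂μ :=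
      tsum_lintegral_ofReal_pow_mul_le (fun k => by fun_prop) (by fun_prop)
        (fun k ω => mul_nonneg (add_nonneg (hg0 _) (hu0 _)) (prod_nonneg fun _ _ => hc0 _))
        hsum hm0
    _ < ⊤ := hR
  exact tsum_geometric_lt_top.mp <| ENNReal.lt_top_of_mul_ne_top_right
    (ENNReal.lt_top_of_mul_ne_top_left hbound.ne hεpos.ne').ne hH0.ne'

theorem garchx_moment_necessity
    {Ω : Type*} [MeasurableSpace Ω] (μ : Measure Ω) [IsProbabilityMeasure μ]
    (ε x : ℤ → Ω → ℝ) (c g u : ℝ → ℝ)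
    (hc : Measurable c) (hg : Measurable g) (hu : Measurable u)
    (hc0 : ∀ y, 0 ≤ c y) (hg0 : ∀ y, 0 ≤ g y) (hu0 : ∀ y, 0 ≤ u y)
    (hmeasε : ∀ t, Measurable (ε t)) (hmeasx : ∀ t, Measurable (x t))
    -- the joint innovations (ε_t, x_t) are i.i.d., with ε_0 independent of x_0
    (hiid : iIndepFun (fun t ω => (ε t ω, x t ω)) μ)
    (hident : ∀ t, IdentDistrib (fun ω => (ε t ω, x t ω)) (fun ω => (ε 0 ω, x 0 ω)) μ μ)
    (hindep : IndepFun (ε 0) (x 0) μ)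
    (m : ℕ) (hm : 1 ≤ m) (δ : ℝ) (hδ : 0 < δ)
    (hgm : ∫⁻ ω, ENNReal.ofReal (g (ε 0 ω) ^ m) ∂μ < ⊤)
    (hum : ∫⁻ ω, ENNReal.ofReal (u (x 0 ω) ^ m) ∂μ < ⊤)
    (hεm : ∫⁻ ω, ENNReal.ofReal (|ε 0 ω| ^ ((m : ℝ) * δ)) ∂μ < ⊤)
    -- nondegeneracy (ε not a.s. zero, volatility positive a.s.)
    (hεpos : 0 < ∫⁻ ω, ENNReal.ofReal (|ε 0 ω| ^ ((m : ℝ) * δ)) ∂μ)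
    (hgu : 0 < ∫⁻ ω, ENNReal.ofReal (g (ε 0 ω) ^ m) ∂μ +
             ∫⁻ ω, ENNReal.ofReal (u (x 0 ω) ^ m) ∂μ)
    (t : ℤ)
    -- the causal series defining σ_t^δ converges a.s.
    (hsum : ∀ᵐ ω ∂μ, Summable (fun k : ℕ =>
        (g (ε (t - 1 - (k : ℤ)) ω) + u (x (t - 1 - (k : ℤ)) ω)) *
          ∏ j ∈ Finset.range k, c (ε (t - 1 - (j : ℤ)) ω)))
    -- finiteness of E|R_t|^{mδ} = E[(σ_t^δ)^m |ε_t|^{mδ}]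
    (hR : ∫⁻ ω, ENNReal.ofReal ((∑' k : ℕ,
        (g (ε (t - 1 - (k : ℤ)) ω) + u (x (t - 1 - (k : ℤ)) ω)) *
          ∏ j ∈ Finset.range k, c (ε (t - 1 - (j : ℤ)) ω)) ^ m *
        |ε t ω| ^ ((m : ℝ) * δ)) ∂μ < ⊤) :
    ∫⁻ ω, ENNReal.ofReal (c (ε 0 ω) ^ m) ∂μ < 1 :=
  garchx_moment_necessity_general μ ε x c g u hc hg hu hc0 hg0 hu0 hmeasε hmeasx hiid hident m hm δ
    hεpos hgu t hsum hR
end
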